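/- arXiv:1406.0092 — 3 statements merged into one kernel-verified Lean document; each statement's English description precedes it below -/
import Mathlib

section
/- Let f : (C^{n+1},0) → (C,0) have an isolated singularity, and define H^n(Ω̃•) = Ω^n/(Ω^n(X*) + dΩ^{n-1}) where Ω^n(X*) = {α ∈ Ω^n : df∧α ∈ fΩ^{n+1}}. Then wedging with df induces a well-defined injective linear map df∧ : H^n(Ω̃•) → Ω^{n+1}/(df∧dΩ^{n-1} + fΩ^{n+1}) whose image equals (df∧Ω^n + fΩ^{n+1})/(df∧dΩ^{n-1} + fΩ^{n+1}). -/
open MvPowerSeries Finset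

noncomputable section

/-- Ring of formal power series in `N` variables, modeling germs at the origin. -/
abbrev O (R : Type*) [CommRing R] (N : ℕ) : Type _ := MvPowerSeries (Fin N) R

/-- Build a power series from its coefficient function. -/
def PS.mk {R : Type*} [CommRing R] {N : ℕ} (c : (Fin N →₀ ℕ) → R) : O R N := c

variable {R : Type*} [CommRing R] {N : ℕ}

/-- Partial derivative of a formal power series. -/
def pd (i : Fin N) (f : O R N) : O R N :=
  PS.mk fun m => ((m i + 1 : ℕ) : R) * coeff (m + Finsupp.single i 1) f

/-- Substitution (composition) `f ∘ Φ`, correct when each `Φ i` has zero constant term. -/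
def psubst (Φ : Fin N → O R N) (f : O R N) : O R N :=
  PS.mk fun m =>
    ∑ k ∈ Finset.Iic (Finsupp.equivFunOnFinite.symm fun _ => m.sum fun _ e => e),
      coeff k f * coeff m (∏ i, Φ i ^ k i)

/-- Index set for `p`-forms: subsets of size `p` of the variables. -/
abbrev Idx (N p : ℕ) : Type := {s : Finset (Fin N) // s.card = p}

/-- Formal differential `p`-forms in `N` variables. -/
abbrev Form (R : Type*) [CommRing R] (N p : ℕ) : Type _ := Idx N p → O R N

/-- Sign of inserting index `i` into the monomial `dx_s`. -/
def sgn (i : Fin N) (s : Finset (Fin N)) : ℤ := (-1) ^ (s.filter (· < i)).card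

/-- Wedge of the 1-form `∑ a i dx_i` with a `p`-form. -/
def wedge1 (a : Fin N → O R N) {p : ℕ} (ω : Form R N p) : Form R N (p + 1) :=
  fun s => ∑ i ∈ s.1.attach,
    (sgn i.1 (s.1.erase i.1) : ℤ) •
      (a i.1 * ω ⟨s.1.erase i.1, by simp [Finset.card_erase_of_mem i.2, s.2]⟩)

/-- Exterior derivative. -/
def formD {p : ℕ} (ω : Form R N p) : Form R N (p + 1) :=
  fun s => ∑ i ∈ s.1.attach,
    (sgn i.1 (s.1.erase i.1) : ℤ) •
      pd i.1 (ω ⟨s.1.erase i.1, by simp [Finset.card_erase_of_mem i.2, s.2]⟩)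

/-- `df ∧ ·`. -/
def dfW (f : O R N) {p : ℕ} (ω : Form R N p) : Form R N (p + 1) :=
  wedge1 (fun i => pd i f) ω

/-- Multiplication of a form by a function. -/
def fmul (f : O R N) {p : ℕ} (ω : Form R N p) : Form R N p := fun s => f * ω s

/-- Interior product `v ⌟ ω`. -/
def iprod (v : Fin N → O R N) {p : ℕ} (ω : Form R N (p + 1)) : Form R N p :=
  fun s => ∑ i ∈ s.1ᶜ.attach,
    (sgn i.1 s.1 : ℤ) •
      (v i.1 * ω ⟨insert i.1 s.1, by
        simp [Finset.card_insert_of_notMem (Finset.mem_compl.mp i.2), s.2]⟩)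

/-- Pullback of a `p`-form under the formal map `Φ`. -/
def pull (Φ : Fin N → O R N) {p : ℕ} (ω : Form R N p) : Form R N p :=
  fun s => ∑ t : Idx N p,
    psubst Φ (ω t) *
      Matrix.det (fun k l : Fin p =>
        pd (s.1.orderIsoOfFin s.2 k : Fin N) (Φ (t.1.orderIsoOfFin t.2 l : Fin N)))

/-- `Φ` is a formal diffeomorphism germ tangent to the identity. -/
def TangentId (Φ : Fin N → O R N) : Prop :=
  (∀ i, constantCoeff (Φ i) = 0) ∧
    ∀ i j, coeff (Finsupp.single j 1) (Φ i) = if i = j then 1 else 0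

section ComplexHelpers

variable {N : ℕ}

/-- The subspace `df ∧ Ω^p ⊆ Ω^{p+1}`. -/
def dfWedgeSub (f : O ℂ N) (p : ℕ) : Submodule ℂ (Form ℂ N (p + 1)) :=
  Submodule.span ℂ (Set.range fun α : Form ℂ N p => dfW f α)

/-- The subspace `f·Ω^p ⊆ Ω^p`. -/
def fMulSub (f : O ℂ N) (p : ℕ) : Submodule ℂ (Form ℂ N p) :=
  Submodule.span ℂ (Set.range fun ω : Form ℂ N p => fmul f ω)

/-- The subspace `df ∧ dΩ^p ⊆ Ω^{p+2}`. -/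
def dfdSub (f : O ℂ N) (p : ℕ) : Submodule ℂ (Form ℂ N (p + 2)) :=
  Submodule.span ℂ (Set.range fun β : Form ℂ N p => dfW f (formD β))

/-- The subspace `dΩ^p ⊆ Ω^{p+1}` of exact forms. -/
def dSub (N p : ℕ) : Submodule ℂ (Form ℂ N (p + 1)) :=
  Submodule.span ℂ (Set.range fun β : Form ℂ N p => formD β)

/-- `Ω^p(X*)`: forms whose restriction to the smooth part of `X = {f = 0}` vanishes,
characterized algebraically as `{α | df ∧ α ∈ f·Ω^{p+1}}`. -/
def vanSub (f : O ℂ N) (p : ℕ) : Submodule ℂ (Form ℂ N p) :=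
  Submodule.span ℂ {α : Form ℂ N p | ∃ β : Form ℂ N (p + 1), dfW f α = fmul f β}

/-- `f : (ℂ^{m+2},0) → (ℂ,0)` has an isolated singularity at the origin:
`f(0) = 0` and the Milnor algebra `Ω^{m+2}/df∧Ω^{m+1}` is finite dimensional. -/
def IsolatedSing (m : ℕ) (f : O ℂ (m + 2)) : Prop :=
  constantCoeff f = 0 ∧
    FiniteDimensional ℂ (Form ℂ (m + 2) (m + 2) ⧸ dfWedgeSub f (m + 1))

/-- The Milnor number `μ = dim Ω^{n+1}/df∧Ω^n`. -/
def μdim (m : ℕ) (f : O ℂ (m + 2)) : ℕ :=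
  Module.finrank ℂ (Form ℂ (m + 2) (m + 2) ⧸ dfWedgeSub f (m + 1))

/-- The Tjurina number `τ = dim Ω^{n+1}/(df∧Ω^n + fΩ^{n+1})`. -/
def τdim (m : ℕ) (f : O ℂ (m + 2)) : ℕ :=
  Module.finrank ℂ (Form ℂ (m + 2) (m + 2) ⧸ (dfWedgeSub f (m + 1) ⊔ fMulSub f (m + 2)))

end ComplexHelpers

/-!
Everything is linear algebra once `df ∧ ·`, `d` and `f ·` are viewed as linear maps `W`, `D`, `F`.
If `W α = W (D β) + F γ`, then `α - D β` lies in `Ω^n(X*) = W⁻¹(range F)`; hence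
`W⁻¹(W (range D) + range F) = Ω^n(X*) + dΩ^{n-1}`, which is exactly the injectivity of the induced
map. Its image is `range W` modulo a submodule that already contains `range F`.
-/

open Submodule LinearMap

section QuotientAlgebra

variable {R M P Q : Type*} [Ring R] [AddCommGroup M] [AddCommGroup P] [AddCommGroup Q]
  [Module R M] [Module R P] [Module R Q]

theorem comap_range_comp_sup (W : M →ₗ[R] P) (D : Q →ₗ[R] M) (B : Submodule R P) :
    (range (W ∘ₗ D) ⊔ B).comap W = B.comap W ⊔ range D := by
  refine le_antisymm (fun α hα => ?_) (sup_le (comap_mono le_sup_right) ?_)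
  · obtain ⟨_, ⟨β, rfl⟩, b, hb, hsum⟩ := mem_sup.mp (mem_comap.mp hα)
    have hvan : α - D β ∈ B.comap W := by
      rw [mem_comap, map_sub, ← hsum]
      simpa using hb
    simpa using add_mem (mem_sup_left hvan) (mem_sup_right (mem_range_self D β))
  · rintro _ ⟨β, rfl⟩
    exact mem_sup_left ⟨β, rfl⟩

theorem map_mkQ_sup_of_le {p B : Submodule R P} (C : Submodule R P) (hB : B ≤ p) :
    (C ⊔ B).map p.mkQ = C.map p.mkQ := by
  rw [Submodule.map_sup, sup_eq_left]
  exact (map_mono hB).trans (mkQ_map_self p).le |>.trans bot_le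

theorem span_range_linearMap {M' : Type*} [AddCommGroup M'] [Module R M'] (G : M →ₗ[R] M') :
    span R (Set.range G) = range G := by
  rw [← LinearMap.coe_range, span_eq]

end QuotientAlgebra

section Linearity

theorem PS.coeff_mk (c : (Fin N →₀ ℕ) → R) (m : Fin N →₀ ℕ) : coeff m (PS.mk c) = c m := rfl

theorem pd_add (i : Fin N) (g h : O R N) : pd i (g + h) = pd i g + pd i h := by
  ext m
  simp [pd, PS.coeff_mk, mul_add]

theorem pd_smul (i : Fin N) (c : R) (g : O R N) : pd i (c • g) = c • pd i g := by
  ext m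
  simp only [pd, PS.coeff_mk, coeff_smul]
  ring

def wedge1ₗ (a : Fin N → O R N) (p : ℕ) : Form R N p →ₗ[R] Form R N (p + 1) where
  toFun := wedge1 a
  map_add' ω η := by
    funext s
    simp [wedge1, mul_add, smul_add, Finset.sum_add_distrib]
  map_smul' c ω := by
    funext s
    simp only [wedge1, Pi.smul_apply, RingHom.id_apply, Finset.smul_sum,
      mul_smul_comm, smul_comm (_ : ℤ) c]

def formDₗ (p : ℕ) : Form R N p →ₗ[R] Form R N (p + 1) where
  toFun := formD
  map_add' ω η := by
    funext s
    simp only [formD, Pi.add_apply, pd_add, smul_add, Finset.sum_add_distrib]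
  map_smul' c ω := by
    funext s
    simp only [formD, Pi.smul_apply, RingHom.id_apply, pd_smul, Finset.smul_sum,
      smul_comm (_ : ℤ) c]

def fmulₗ (f : O R N) (p : ℕ) : Form R N p →ₗ[R] Form R N p where
  toFun := fmul f
  map_add' ω η := by funext s; simp [fmul, mul_add]
  map_smul' c ω := by funext s; simp [fmul]

def dfWₗ (f : O R N) (p : ℕ) : Form R N p →ₗ[R] Form R N (p + 1) :=
  wedge1ₗ (fun i => pd i f) p

end Linearity

section Subspaces

variable (f : O ℂ N) (p : ℕ)

theorem fMulSub_eq_range : fMulSub f p = range (fmulₗ f p) :=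
  span_range_linearMap (fmulₗ f p)

theorem dfWedgeSub_eq_range : dfWedgeSub f p = range (dfWₗ f p) :=
  span_range_linearMap (dfWₗ f p)

theorem dfdSub_eq_range : dfdSub f p = range (dfWₗ f (p + 1) ∘ₗ formDₗ p) :=
  span_range_linearMap (dfWₗ f (p + 1) ∘ₗ formDₗ p)

theorem dSub_eq_range : dSub N p = range (formDₗ (R := ℂ) (N := N) p) :=
  span_range_linearMap (formDₗ (R := ℂ) (N := N) p)

theorem vanSub_eq_comap : vanSub f p = (range (fmulₗ f (p + 1))).comap (dfWₗ f p) := by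
  rw [vanSub, ← span_eq ((range (fmulₗ f (p + 1))).comap (dfWₗ f p))]
  congr 1
  ext α
  exact ⟨fun ⟨β, hβ⟩ => ⟨β, hβ.symm⟩, fun ⟨β, hβ⟩ => ⟨β, hβ.symm⟩⟩

end Subspaces

theorem df_wedge_injective_image_general (m : ℕ) (f : O ℂ (m + 2))
    (K : Submodule ℂ (Form ℂ (m + 2) (m + 1)))
    (hK : K = vanSub f (m + 1) ⊔ dSub (m + 2) m)
    (A : Submodule ℂ (Form ℂ (m + 2) (m + 2)))
    (hA : A = dfdSub f m ⊔ fMulSub f (m + 2)) :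
    ∃ L : (Form ℂ (m + 2) (m + 1) ⧸ K) →ₗ[ℂ] (Form ℂ (m + 2) (m + 2) ⧸ A),
      (∀ α : Form ℂ (m + 2) (m + 1), L (K.mkQ α) = A.mkQ (dfW f α)) ∧
      Function.Injective L ∧
      LinearMap.range L = (dfWedgeSub f (m + 1) ⊔ fMulSub f (m + 2)).map A.mkQ := by
  have hcomap : A.comap (dfWₗ f (m + 1)) = K := by
    rw [hA, hK, dfdSub_eq_range, fMulSub_eq_range, comap_range_comp_sup, vanSub_eq_comap,
      dSub_eq_range]
  refine ⟨K.mapQ A (dfWₗ f (m + 1)) hcomap.ge, fun α => rfl, ?_, ?_⟩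
  · rw [← ker_eq_bot, ker_mapQ, hcomap, mkQ_map_self]
  · have hfA : fMulSub f (m + 2) ≤ A := hA ▸ le_sup_right
    rw [range_mapQ, map_mkQ_sup_of_le _ hfA, dfWedgeSub_eq_range]

/-- wedging with `df` induces a well-defined injective linear map
`df∧ : H^n(Ω̃•) = Ω^n/(Ω^n(X*) + dΩ^{n-1}) → Ω^{n+1}/(df∧dΩ^{n-1} + fΩ^{n+1})`
whose image is `(df∧Ω^n + fΩ^{n+1})/(df∧dΩ^{n-1} + fΩ^{n+1})`  (here `n = m+1`). -/
theorem df_wedge_injective_image (m : ℕ) (f : O ℂ (m + 2))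
    (hiso : IsolatedSing m f)
    (K : Submodule ℂ (Form ℂ (m + 2) (m + 1)))
    (hK : K = vanSub f (m + 1) ⊔ dSub (m + 2) m)
    (A : Submodule ℂ (Form ℂ (m + 2) (m + 2)))
    (hA : A = dfdSub f m ⊔ fMulSub f (m + 2)) :
    ∃ L : (Form ℂ (m + 2) (m + 1) ⧸ K) →ₗ[ℂ] (Form ℂ (m + 2) (m + 2) ⧸ A),
      (∀ α : Form ℂ (m + 2) (m + 1), L (K.mkQ α) = A.mkQ (dfW f α)) ∧
      Function.Injective L ∧
      LinearMap.range L = (dfWedgeSub f (m + 1) ⊔ fMulSub f (m + 2)).map A.mkQ :=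
  df_wedge_injective_image_general m f K hK A hA
end
end

section
/- Interpolation lemma: let Φ be a germ of a formal (or analytic) diffeomorphism of (R^{n+1},0) tangent to the identity (Φ(x) = x mod m^2). Then there exists a one-parameter family Φ_t of formal diffeomorphisms, with coefficients polynomial in t, satisfying Φ_0 = Id, Φ_1 = Φ, and Φ'_t = Φ'_0 ∘ Φ_t. -/
open MvPowerSeries Finset

noncomputable section

variable {R : Type*} [CommRing R] {N : ℕ}

section Families

variable {N : ℕ}

/-- Evaluate a family (coefficients polynomial in `t`) at time `t = r`. -/
def evalAt (r : ℝ) : O (Polynomial ℝ) N →+* O ℝ N :=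
  MvPowerSeries.map (Polynomial.evalRingHom r)

/-- A time-independent power series, viewed as a constant family. -/
def toPoly : O ℝ N →+* O (Polynomial ℝ) N :=
  MvPowerSeries.map (Polynomial.C)

/-- Coefficientwise derivative in `t` of a family. -/
def tder (φ : O (Polynomial ℝ) N) : O (Polynomial ℝ) N :=
  PS.mk fun m => Polynomial.derivative (coeff m φ)

/-- `∫₀¹ P(t) dt` for a polynomial `P`. -/
def intPoly (P : Polynomial ℝ) : ℝ :=
  ∑ k ∈ Finset.range (P.natDegree + 1), P.coeff k / (k + 1)

/-- Coefficientwise integral `∫₀¹ · dt` of a family of power series. -/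
def intO (φ : O (Polynomial ℝ) N) : O ℝ N :=
  PS.mk fun m => intPoly (coeff m φ)

/-- Componentwise integral `∫₀¹ · dt` of a family of forms. -/
def intF {p : ℕ} (ω : Form (Polynomial ℝ) N p) : Form ℝ N p :=
  fun s => intO (ω s)

/-- Componentwise time-`r` evaluation of a family of forms. -/
def evalAtF (r : ℝ) {p : ℕ} (ω : Form (Polynomial ℝ) N p) : Form ℝ N p :=
  fun s => evalAt r (ω s)

/-- A form viewed as a constant family. -/
def toPolyF {p : ℕ} (ω : Form ℝ N p) : Form (Polynomial ℝ) N p :=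
  fun s => toPoly (ω s)

end Families

/-!
Take `Ψ_t = e^{t D_V}` applied to the coordinate functions, where `D_V = ∑ᵢ Vᵢ ∂ᵢ` is the
derivation of a formal vector field `V` of order `≥ 2`. Since `D_V` raises the order, every
coefficient of `e^{t D_V} f` is a polynomial in `t`. By the Leibniz rule `e^{t D_V}` is a ring
homomorphism, hence commutes with substitution, and `∂ₜ e^{t D_V} xᵢ = e^{t D_V} Vᵢ = Vᵢ ∘ Ψ_t`,
which is the required equation because `Ψ'_0 = V`.

It remains to choose `V` with `e^{D_V} xᵢ = Φᵢ`. In degree `d`, `e^{D_V} xᵢ = xᵢ + Vᵢ + …`,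
where the omitted terms only involve the components of `V` of degree `< d`; so `V` is found
degree by degree.
-/

namespace Sternberg

section Order

lemma le_order_add {a : ℕ∞} {f g : O R N} (hf : a ≤ f.order) (hg : a ≤ g.order) :
    a ≤ (f + g).order :=
  (le_min hf hg).trans min_order_le_add

lemma le_order_sub {a : ℕ∞} {f g : O R N} (hf : a ≤ f.order) (hg : a ≤ g.order) :
    a ≤ (f - g).order := by
  rw [sub_eq_add_neg]
  exact le_order_add hf (by rwa [order_neg])

lemma le_order_sum {ι : Type*} (s : Finset ι) (g : ι → O R N) {a : ℕ∞}
    (hg : ∀ i ∈ s, a ≤ (g i).order) : a ≤ (∑ i ∈ s, g i).order := by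
  classical
  induction s using Finset.induction with
  | empty => simp
  | insert j s hj ih =>
    rw [Finset.sum_insert hj]
    exact le_order_add (hg j (mem_insert_self j s)) (ih fun i hi => hg i (mem_insert_of_mem hi))

lemma one_le_order_X (i : Fin N) : 1 ≤ (X i : O R N).order :=
  one_le_order_iff_constCoeff_eq_zero.mpr (constantCoeff_X i)

lemma le_order_homogeneousComponent (d : ℕ) (g : O R N) :
    d ≤ (homogeneousComponent d g).order :=
  nat_le_order fun m hm => by simp [coeff_homogeneousComponent, hm.ne]

lemma order_le_order_homogeneousComponent (d : ℕ) (g : O R N) :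
    g.order ≤ (homogeneousComponent d g).order :=
  le_order fun m hm => by
    rw [coeff_homogeneousComponent, coeff_of_lt_order hm, ite_self]

lemma le_order_sub_homogeneousComponent {d : ℕ} {g : O R N} (hg : d ≤ g.order) :
    d + 1 ≤ (g - homogeneousComponent d g).order := by
  refine nat_le_order fun m (hm : m.degree < d + 1) => ?_
  rw [map_sub, coeff_homogeneousComponent]
  split_ifs with h
  · exact sub_self _
  · rw [coeff_of_lt_order ((Nat.cast_lt.mpr (by omega)).trans_le hg), sub_zero]

end Order

section Tangent

lemma tangentId_iff_two_le_order_sub_X {Ψ : Fin N → O R N} :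
    TangentId Ψ ↔ ∀ i, 2 ≤ (Ψ i - X i).order := by
  classical
  have hX : ∀ i j, coeff (Finsupp.single j 1) (X i : O R N) = if i = j then 1 else 0 :=
    fun i j => by simp [coeff_X, Finsupp.single_left_inj one_ne_zero, eq_comm]
  constructor
  · rintro ⟨h₀, h₁⟩ i
    refine nat_le_order fun d hd => ?_
    rcases Nat.lt_succ_iff.mp hd |>.lt_or_eq with hd | hd
    · rw [Nat.lt_one_iff, Finsupp.degree_eq_zero_iff] at hd
      simp [hd, h₀]
    · obtain ⟨j, rfl⟩ : d ∈ Set.range (fun j => Finsupp.single j 1) := by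
        rw [Finsupp.range_single_one]; exact hd
      simp [h₁, hX]
  · intro h
    have hcoeff : ∀ i (d : Fin N →₀ ℕ), d.degree < 2 → coeff d (Ψ i) = coeff d (X i) :=
      fun i d hd => sub_eq_zero.mp <| by
        rw [← map_sub]; exact coeff_of_lt_order ((Nat.cast_lt.mpr hd).trans_le (h i))
    refine ⟨fun i => ?_, fun i j => ?_⟩
    · simpa using hcoeff i 0 (by simp)
    · rw [hcoeff i _ (by simp), hX]

lemma _root_.TangentId.map {S : Type*} [CommRing S] {Ψ : Fin N → O R N} (hΨ : TangentId Ψ)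
    (φ : R →+* S) : TangentId fun i => MvPowerSeries.map φ (Ψ i) := by
  rw [tangentId_iff_two_le_order_sub_X] at hΨ ⊢
  intro i
  rw [← map_X φ i, ← map_sub]
  exact (hΨ i).trans (le_order_map φ)

lemma _root_.TangentId.two_le_order_sub {Φ Ψ : Fin N → O R N} (hΦ : TangentId Φ)
    (hΨ : TangentId Ψ) (i : Fin N) : 2 ≤ (Φ i - Ψ i).order := by
  rw [tangentId_iff_two_le_order_sub_X] at hΦ hΨ
  simpa using le_order_sub (hΦ i) (hΨ i)

end Tangent

section Substitution

lemma coe_trunc'_eq_sum (n : Fin N →₀ ℕ) (g : O R N) :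
    ((trunc' R n g : MvPolynomial (Fin N) R) : O R N)
      = ∑ k ∈ Finset.Iic n, C (coeff k g) * ∏ i, X i ^ k i := by
  rw [← MvPolynomial.coeToMvPowerSeries.ringHom_apply, trunc', truncFinset_apply, map_sum]
  refine Finset.sum_congr rfl fun k _ => ?_
  rw [MvPolynomial.coeToMvPowerSeries.ringHom_apply, MvPolynomial.coe_monomial, monomial_eq',
    Finsupp.prod_fintype _ _ (fun _ => pow_zero _)]

lemma psubst_X_map {S : Type*} [CommRing S] (φ : O R N →+* O S N) (ψ : R →+* S)
    (hC : ∀ c, φ (C c) = C (ψ c)) (hφ : ∀ f, f.order ≤ (φ f).order) (g : O R N) :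
    psubst (fun i => φ (X i)) (MvPowerSeries.map ψ g) = φ g := by
  -- `psubst` reads `g` only through its truncation `p`, on which `φ` is substitution, while
  -- `φ (g - p)` has order `> deg m`.
  ext m
  set n : Fin N →₀ ℕ := Finsupp.equivFunOnFinite.symm fun _ => m.degree
  set p : O R N := ((trunc' R n g : MvPolynomial (Fin N) R) : O R N)
  have hrest : m.degree + 1 ≤ (g - p).order := by
    refine nat_le_order fun d hd => ?_
    have hdn : d ≤ n := fun i => (Finsupp.le_degree i d).trans (Nat.lt_succ_iff.mp hd)
    rw [map_sub, MvPolynomial.coeff_coe, coeff_trunc', if_pos hdn, sub_self]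
  have hφp : coeff m (φ p) = coeff m (psubst (fun i => φ (X i)) (MvPowerSeries.map ψ g)) := by
    simp only [p, coe_trunc'_eq_sum, map_sum, map_mul, map_prod, map_pow, hC, coeff_C_mul]
    rfl
  rw [← hφp, eq_comm, ← sub_eq_zero, ← map_sub, ← map_sub]
  refine coeff_of_lt_order (lt_of_lt_of_le ?_ (hrest.trans (hφ _)))
  exact_mod_cast Nat.lt_add_one _

end Substitution

section VectorField

def vecDeriv (V : Fin N → O R N) : Derivation R (O R N) (O R N) :=
  ∑ i, V i • pderiv R i

lemma vecDeriv_apply (V : Fin N → O R N) (f : O R N) :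
    vecDeriv V f = ∑ i, V i * pderiv R i f := by
  rw [vecDeriv, ← Derivation.coeFnAddMonoidHom_apply, map_sum, Finset.sum_apply]
  rfl

lemma vecDeriv_X (V : Fin N → O R N) (i : Fin N) : vecDeriv V (X i) = V i := by
  classical
  simp [vecDeriv_apply, pderiv_X, Pi.single_apply]

lemma vecDeriv_sub_vecDeriv (V W : Fin N → O R N) (f : O R N) :
    vecDeriv V f - vecDeriv W f = vecDeriv (V - W) f := by
  simp only [vecDeriv_apply, ← Finset.sum_sub_distrib, Pi.sub_apply, sub_mul]

lemma order_le_order_pderiv_add_one (i : Fin N) (f : O R N) :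
    f.order ≤ (pderiv R i f).order + 1 := by
  by_cases h : pderiv R i f = 0
  · simp [h]
  obtain ⟨d, hd, hdeg⟩ := exists_coeff_ne_zero_and_order (ne_zero_iff_order_finite.mp h)
  rw [coeff_pderiv] at hd
  calc f.order ≤ (d + Finsupp.single i 1).degree := order_le (left_ne_zero_of_mul hd)
    _ = (pderiv R i f).order + 1 := by simp [← hdeg]

lemma le_order_vecDeriv_add_one {V : Fin N → O R N} {a : ℕ∞} (hV : ∀ i, a ≤ (V i).order)
    (f : O R N) : a + f.order ≤ (vecDeriv V f).order + 1 := by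
  rw [← tsub_le_iff_right, vecDeriv_apply]
  refine le_order_sum _ _ fun i _ => tsub_le_iff_right.mpr ?_
  calc a + f.order ≤ (V i).order + ((pderiv R i f).order + 1) :=
        add_le_add (hV i) (order_le_order_pderiv_add_one i f)
    _ ≤ (V i * pderiv R i f).order + 1 := by rw [← add_assoc]; gcongr; exact le_order_mul

variable {V W W' : Fin N → O R N}

lemma order_add_one_le_order_vecDeriv (hV : ∀ i, 2 ≤ (V i).order) (f : O R N) :
    f.order + 1 ≤ (vecDeriv V f).order := by
  have h := le_order_vecDeriv_add_one hV f
  rw [show (2 : ℕ∞) + f.order = f.order + 1 + 1 by ring] at h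
  exact (ENat.add_le_add_iff_right ENat.one_ne_top).mp h

lemma order_add_le_order_iterate_vecDeriv (hV : ∀ i, 2 ≤ (V i).order) (f : O R N) (k : ℕ) :
    f.order + k ≤ ((vecDeriv V)^[k] f).order := by
  induction k with
  | zero => simp
  | succ k ih =>
    rw [Function.iterate_succ_apply', Nat.cast_succ, ← add_assoc]
    exact (add_le_add ih le_rfl).trans (order_add_one_le_order_vecDeriv hV _)

lemma le_order_iterate_vecDeriv_sub (hW : ∀ i, 2 ≤ (W i).order) (hW' : ∀ i, 2 ≤ (W' i).order)
    {d : ℕ∞} (hd : ∀ i, d ≤ ((W - W') i).order) (f : O R N) (k : ℕ) :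
    d + f.order + k ≤ ((vecDeriv W)^[k] f - (vecDeriv W')^[k] f).order + 2 := by
  induction k with
  | zero => simp
  | succ k ih =>
    set δ := (vecDeriv W)^[k] f - (vecDeriv W')^[k] f
    have hsplit : (vecDeriv W)^[k + 1] f - (vecDeriv W')^[k + 1] f
        = vecDeriv W δ + vecDeriv (W - W') ((vecDeriv W')^[k] f) := by
      rw [Function.iterate_succ_apply', Function.iterate_succ_apply', ← vecDeriv_sub_vecDeriv,
        map_sub]
      abel
    have h₁ : d + f.order + (k + 1 : ℕ) ≤ (vecDeriv W δ).order + 2 := by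
      calc d + f.order + (k + 1 : ℕ) = d + f.order + k + 1 := by push_cast; ring
        _ ≤ δ.order + 2 + 1 := by gcongr
        _ = δ.order + 1 + 2 := by ring
        _ ≤ (vecDeriv W δ).order + 2 := by gcongr; exact order_add_one_le_order_vecDeriv hW δ
    have h₂ : d + f.order + (k + 1 : ℕ)
        ≤ (vecDeriv (W - W') ((vecDeriv W')^[k] f)).order + 2 := by
      calc d + f.order + (k + 1 : ℕ) = d + (f.order + k) + 1 := by push_cast; ring
        _ ≤ d + ((vecDeriv W')^[k] f).order + 1 := by
          gcongr; exact order_add_le_order_iterate_vecDeriv hW' f k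
        _ ≤ (vecDeriv (W - W') ((vecDeriv W')^[k] f)).order + 1 + 1 :=
          add_le_add (le_order_vecDeriv_add_one hd _) le_rfl
        _ = _ := by ring
    rw [hsplit]
    exact (le_min h₁ h₂).trans (by rw [min_add_add_right]; gcongr; exact min_order_le_add)

end VectorField

variable {K : Type*} [Field K]

section ExpTerm

def expTerm (V : Fin N → O K N) (k : ℕ) : O K N →ₗ[K] O K N :=
  (k.factorial : K)⁻¹ • (vecDeriv V : O K N →ₗ[K] O K N) ^ k

variable (V : Fin N → O K N)

lemma expTerm_apply (k : ℕ) (f : O K N) :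
    expTerm V k f = (k.factorial : K)⁻¹ • (vecDeriv V)^[k] f := by
  simp [expTerm, Module.End.pow_apply]

@[simp]
lemma expTerm_zero (f : O K N) : expTerm V 0 f = f := by
  simp [expTerm_apply]

lemma expTerm_one (f : O K N) : expTerm V 1 f = vecDeriv V f := by
  simp [expTerm_apply]

lemma expTerm_succ_C (k : ℕ) (c : K) : expTerm V (k + 1) (C c) = 0 := by
  rw [expTerm_apply, Function.iterate_succ_apply, c_eq_algebraMap,
    Derivation.map_algebraMap, iterate_map_zero, smul_zero]

variable [CharZero K]

lemma expTerm_vecDeriv (k : ℕ) (f : O K N) :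
    expTerm V k (vecDeriv V f) = ((k : K) + 1) • expTerm V (k + 1) f := by
  rw [expTerm_apply, expTerm_apply, ← Function.iterate_succ_apply, smul_smul,
    Nat.factorial_succ, Nat.cast_mul, mul_inv, ← mul_assoc, Nat.cast_succ,
    mul_inv_cancel₀ (Nat.cast_add_one_ne_zero k), one_mul]

lemma vecDeriv_expTerm (k : ℕ) (f : O K N) :
    vecDeriv V (expTerm V k f) = ((k : K) + 1) • expTerm V (k + 1) f := by
  rw [← expTerm_vecDeriv, expTerm_apply, expTerm_apply, Derivation.map_smul,
    ← Function.iterate_succ_apply' (vecDeriv V), Function.iterate_succ_apply]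

lemma expTerm_mul (k : ℕ) (f g : O K N) :
    expTerm V k (f * g) = ∑ p ∈ antidiagonal k, expTerm V p.1 f * expTerm V p.2 g := by
  induction k with
  | zero => simp
  | succ k ih =>
    set E : ℕ × ℕ → O K N := fun p => expTerm V p.1 f * expTerm V p.2 g
    have hleft : ∑ p ∈ antidiagonal k, vecDeriv V (expTerm V p.1 f) * expTerm V p.2 g
        = ∑ p ∈ antidiagonal (k + 1), (p.1 : K) • E p := by
      rw [Finset.Nat.sum_antidiagonal_succ]
      simp [E, vecDeriv_expTerm]
    have hright : ∑ p ∈ antidiagonal k, expTerm V p.1 f * vecDeriv V (expTerm V p.2 g)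
        = ∑ p ∈ antidiagonal (k + 1), (p.2 : K) • E p := by
      rw [Finset.Nat.sum_antidiagonal_succ']
      simp [E, vecDeriv_expTerm]
    have hsum : ((k : K) + 1) • expTerm V (k + 1) (f * g)
        = ((k : K) + 1) • ∑ p ∈ antidiagonal (k + 1), E p := by
      have hD : ∀ p, vecDeriv V (E p)
          = vecDeriv V (expTerm V p.1 f) * expTerm V p.2 g
            + expTerm V p.1 f * vecDeriv V (expTerm V p.2 g) := fun p => by
        rw [Derivation.leibniz, smul_eq_mul, smul_eq_mul]; ring
      rw [← vecDeriv_expTerm, ih, map_sum, Finset.sum_congr rfl fun p _ => hD p,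
        Finset.sum_add_distrib, hleft, hright, ← Finset.sum_add_distrib, Finset.smul_sum]
      refine Finset.sum_congr rfl fun p hp => ?_
      rw [← add_smul, ← Nat.cast_add, mem_antidiagonal.mp hp, Nat.cast_succ]
    exact smul_right_injective _ (Nat.cast_add_one_ne_zero k) hsum

end ExpTerm

section ExpFamily

variable {V W W' : Fin N → O K N}

lemma order_add_le_order_expTerm (hV : ∀ i, 2 ≤ (V i).order) (k : ℕ) (f : O K N) :
    f.order + k ≤ (expTerm V k f).order := by
  rw [expTerm_apply]
  exact (order_add_le_order_iterate_vecDeriv hV f k).trans le_order_smul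

lemma coeff_expTerm_of_degree_lt (hV : ∀ i, 2 ≤ (V i).order) {k : ℕ} {m : Fin N →₀ ℕ}
    (hm : m.degree < k) (f : O K N) : coeff m (expTerm V k f) = 0 :=
  coeff_of_lt_order <| (Nat.cast_lt.mpr hm).trans_le (le_add_self.trans
    (order_add_le_order_expTerm hV k f))

lemma le_order_expTerm_sub (hW : ∀ i, 2 ≤ (W i).order) (hW' : ∀ i, 2 ≤ (W' i).order)
    {d : ℕ∞} (hd : ∀ i, d ≤ ((W - W') i).order) (k : ℕ) (f : O K N) :
    d + f.order + k ≤ (expTerm W k f - expTerm W' k f).order + 2 := by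
  rw [expTerm_apply, expTerm_apply, ← smul_sub]
  exact (le_order_iterate_vecDeriv_sub hW hW' hd f k).trans (add_le_add le_order_smul le_rfl)

variable (V) in
/-- `e^{t D_V} f = ∑ₖ tᵏ D_Vᵏ f / k!`. The coefficient of `m` keeps only the terms `k ≤ deg m`,
which loses nothing once every `V i` has order `≥ 2`. -/
def expFamily (f : O K N) : O (Polynomial K) N :=
  PS.mk fun m => ∑ k ∈ range (m.degree + 1), Polynomial.monomial k (coeff m (expTerm V k f))

variable (V) in
lemma coeff_expFamily (f : O K N) (m : Fin N →₀ ℕ) :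
    coeff m (expFamily V f)
      = ∑ k ∈ range (m.degree + 1), Polynomial.monomial k (coeff m (expTerm V k f)) :=
  rfl

lemma coeff_coeff_expFamily (hV : ∀ i, 2 ≤ (V i).order) (f : O K N) (m : Fin N →₀ ℕ) (k : ℕ) :
    (coeff m (expFamily V f)).coeff k = coeff m (expTerm V k f) := by
  simp only [coeff_expFamily, Polynomial.finsetSum_coeff, Polynomial.coeff_monomial,
    Finset.sum_ite_eq', Finset.mem_range]
  split_ifs with hk
  · rfl
  · exact (coeff_expTerm_of_degree_lt hV (by omega) f).symm

lemma expFamily_add (hV : ∀ i, 2 ≤ (V i).order) (f g : O K N) :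
    expFamily V (f + g) = expFamily V f + expFamily V g := by
  ext m k
  simp only [map_add, Polynomial.coeff_add, coeff_coeff_expFamily hV]

lemma expFamily_C (hV : ∀ i, 2 ≤ (V i).order) (c : K) :
    expFamily V (C c) = C (Polynomial.C c) := by
  classical
  ext m k
  rw [coeff_coeff_expFamily hV, coeff_C]
  rcases k with _ | k
  · split_ifs <;> simp [coeff_C, *]
  · split_ifs <;> simp [expTerm_succ_C]

lemma expFamily_mul [CharZero K] (hV : ∀ i, 2 ≤ (V i).order) (f g : O K N) :
    expFamily V (f * g) = expFamily V f * expFamily V g := by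
  ext m k
  simp only [coeff_coeff_expFamily hV, expTerm_mul, map_sum, coeff_mul, Polynomial.finsetSum_coeff,
    Polynomial.coeff_mul]
  rw [Finset.sum_comm]

def expFamilyHom [CharZero K] (hV : ∀ i, 2 ≤ (V i).order) : O K N →+* O (Polynomial K) N where
  toFun := expFamily V
  map_one' := by rw [← map_one C, expFamily_C hV, map_one, map_one]
  map_mul' := expFamily_mul hV
  map_zero' := by rw [← map_zero C, expFamily_C hV, map_zero, map_zero]
  map_add' := expFamily_add hV

lemma le_order_expFamily (hV : ∀ i, 2 ≤ (V i).order) (f : O K N) :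
    f.order ≤ (expFamily V f).order := by
  refine le_order fun m hm => Polynomial.ext fun k => ?_
  rw [coeff_coeff_expFamily hV, Polynomial.coeff_zero]
  exact coeff_of_lt_order (hm.trans_le (le_self_add.trans (order_add_le_order_expTerm hV k f)))

lemma psubst_expFamily [CharZero K] (hV : ∀ i, 2 ≤ (V i).order) (g : O K N) :
    psubst (fun i => expFamily V (X i)) (MvPowerSeries.map Polynomial.C g) = expFamily V g :=
  psubst_X_map (expFamilyHom hV) Polynomial.C (expFamily_C hV) (le_order_expFamily hV) g

variable (V) in
lemma map_eval_zero_expFamily (f : O K N) :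
    MvPowerSeries.map (Polynomial.evalRingHom 0) (expFamily V f) = f := by
  ext m
  simp [coeff_expFamily, Finset.sum_range_succ', Polynomial.eval_finsetSum]

lemma derivative_coeff_expFamily [CharZero K] (hV : ∀ i, 2 ≤ (V i).order) (f : O K N)
    (m : Fin N →₀ ℕ) :
    Polynomial.derivative (coeff m (expFamily V f)) = coeff m (expFamily V (vecDeriv V f)) := by
  ext k
  rw [Polynomial.coeff_derivative, coeff_coeff_expFamily hV, coeff_coeff_expFamily hV,
    expTerm_vecDeriv, coeff_smul, mul_comm]

lemma order_add_one_le_order_expFamily_sub (hV : ∀ i, 2 ≤ (V i).order) (f : O K N) :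
    f.order + 1 ≤ (expFamily V f - MvPowerSeries.map Polynomial.C f).order := by
  refine le_order fun d hd => Polynomial.ext fun k => ?_
  rw [map_sub, coeff_map, Polynomial.coeff_sub, coeff_coeff_expFamily hV, Polynomial.coeff_zero]
  rcases k with _ | k
  · simp
  · rw [Polynomial.coeff_C_succ, sub_zero]
    refine coeff_of_lt_order (hd.trans_le ((add_le_add le_rfl ?_).trans
      (order_add_le_order_expTerm hV (k + 1) f)))
    exact_mod_cast Nat.le_add_left 1 k

lemma tangentId_expFamily (hV : ∀ i, 2 ≤ (V i).order) : TangentId fun i => expFamily V (X i) := by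
  refine tangentId_iff_two_le_order_sub_X.mpr fun i => ?_
  calc (2 : ℕ∞) = 1 + 1 := by norm_num
    _ ≤ (X i : O K N).order + 1 := by gcongr; exact one_le_order_X i
    _ ≤ _ := by simpa using order_add_one_le_order_expFamily_sub hV (X i)

end ExpFamily

section ExpDeriv

variable {W W' : Fin N → O K N}

variable (W) in
def expDeriv (f : O K N) : O K N :=
  MvPowerSeries.map (Polynomial.evalRingHom 1) (expFamily W f)

lemma coeff_expDeriv_eq_sum_range (hW : ∀ i, 2 ≤ (W i).order) (f : O K N)
    {m : Fin N →₀ ℕ} {B : ℕ} (hB : m.degree ≤ B) :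
    coeff m (expDeriv W f) = ∑ k ∈ range (B + 1), coeff m (expTerm W k f) := by
  have hsum : coeff m (expDeriv W f) = ∑ k ∈ range (m.degree + 1), coeff m (expTerm W k f) := by
    simp [expDeriv, coeff_expFamily]
  rw [hsum]
  refine Finset.sum_subset (Finset.range_subset_range.mpr (by omega)) fun k hk hk' => ?_
  simp only [Finset.mem_range, not_lt] at hk'
  exact coeff_expTerm_of_degree_lt hW (by omega) f

lemma tangentId_expDeriv (hW : ∀ i, 2 ≤ (W i).order) : TangentId fun i => expDeriv W (X i) :=
  (tangentId_expFamily hW).map _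

lemma le_order_expDeriv_sub_sub (hW : ∀ i, 2 ≤ (W i).order) (hW' : ∀ i, 2 ≤ (W' i).order)
    {d : ℕ} (hd : ∀ i, d ≤ ((W - W') i).order) (i : Fin N) :
    d + 1 ≤ (expDeriv W (X i) - expDeriv W' (X i) - (W - W') i).order := by
  refine nat_le_order fun m (hm : m.degree < d + 1) => ?_
  have hterm : ∀ k, coeff m (expTerm W (k + 2) (X i)) = coeff m (expTerm W' (k + 2) (X i)) := by
    intro k
    rw [← sub_eq_zero, ← map_sub]
    refine coeff_of_lt_order ?_
    have h := (le_order_expTerm_sub hW hW' hd (k + 2) (X i)).trans'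
      (add_le_add (add_le_add le_rfl (one_le_order_X i)) le_rfl)
    generalize (expTerm W (k + 2) (X i) - expTerm W' (k + 2) (X i)).order = o at h ⊢
    cases o with
    | top => exact ENat.natCast_lt_top _
    | coe o => norm_cast at h ⊢; omega
  rw [map_sub, map_sub, coeff_expDeriv_eq_sum_range hW _ (B := m.degree + 1) (by omega),
    coeff_expDeriv_eq_sum_range hW' _ (B := m.degree + 1) (by omega), ← Finset.sum_sub_distrib,
    Finset.sum_range_succ', Finset.sum_range_succ']
  simp [hterm, expTerm_one, vecDeriv_X]

end ExpDeriv

section Logarithm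

variable (Φ : Fin N → O K N)

/-- Invariant: `e^{D_{W_d}} xᵢ ≡ Φ i` modulo degree `d`. It survives the step `d → d + 1` because
a correction of degree `d` added to `W` enters `e^{D_W} xᵢ` unchanged in degree `d`. -/
def logApprox : ℕ → Fin N → O K N
  | 0 => 0
  | d + 1 => fun i => logApprox d i + homogeneousComponent d (Φ i - expDeriv (logApprox d) (X i))

def logField (i : Fin N) : O K N :=
  PS.mk fun m => coeff m (logApprox Φ (m.degree + 1) i)

lemma logApprox_succ_sub (d : ℕ) (i : Fin N) :
    logApprox Φ (d + 1) i - logApprox Φ d i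
      = homogeneousComponent d (Φ i - expDeriv (logApprox Φ d) (X i)) :=
  add_sub_cancel_left _ _

lemma coeff_logApprox_of_degree_lt {d : ℕ} {m : Fin N →₀ ℕ} (hm : m.degree < d) (i : Fin N) :
    coeff m (logApprox Φ d i) = coeff m (logField Φ i) := by
  obtain ⟨e, rfl⟩ := Nat.exists_eq_add_of_lt hm
  induction e with
  | zero => rfl
  | succ e ih =>
    rw [← ih (by omega), ← sub_eq_zero, ← map_sub, show m.degree + (e + 1) + 1
      = m.degree + e + 1 + 1 by ring, logApprox_succ_sub, coeff_homogeneousComponent,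
      if_neg (by omega)]

lemma le_order_logField_sub_logApprox (d : ℕ) (i : Fin N) :
    d ≤ (logField Φ i - logApprox Φ d i).order :=
  nat_le_order fun m hm => by
    rw [map_sub, coeff_logApprox_of_degree_lt Φ hm, sub_self]

variable {Φ}

lemma two_le_order_logApprox (hΦ : TangentId Φ) (d : ℕ) (i : Fin N) :
    2 ≤ (logApprox Φ d i).order := by
  induction d generalizing i with
  | zero => simp [logApprox]
  | succ d ih =>
    refine le_order_add (ih i) ((order_le_order_homogeneousComponent _ _).trans' ?_)
    exact hΦ.two_le_order_sub (tangentId_expDeriv ih) i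

lemma two_le_order_logField (hΦ : TangentId Φ) (i : Fin N) : 2 ≤ (logField Φ i).order := by
  rw [← sub_add_cancel (logField Φ i) (logApprox Φ 2 i)]
  exact le_order_add (le_order_logField_sub_logApprox Φ 2 i) (two_le_order_logApprox hΦ 2 i)

lemma le_order_sub_expDeriv_logApprox (hΦ : TangentId Φ) (d : ℕ) (i : Fin N) :
    d ≤ (Φ i - expDeriv (logApprox Φ d) (X i)).order := by
  induction d generalizing i with
  | zero => simp
  | succ d ih =>
    set W := logApprox Φ d
    set g := Φ i - expDeriv W (X i)
    have hsplit : Φ i - expDeriv (logApprox Φ (d + 1)) (X i)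
        = (g - homogeneousComponent d g)
          - (expDeriv (logApprox Φ (d + 1)) (X i) - expDeriv W (X i)
            - (logApprox Φ (d + 1) - W) i) := by
      rw [Pi.sub_apply, logApprox_succ_sub]; ring
    have hstep : ∀ j, (d : ℕ∞) ≤ ((logApprox Φ (d + 1) - W) j).order := fun j => by
      rw [Pi.sub_apply, logApprox_succ_sub]; exact le_order_homogeneousComponent _ _
    rw [hsplit]
    push_cast
    exact le_order_sub (le_order_sub_homogeneousComponent (ih i))
      (le_order_expDeriv_sub_sub (two_le_order_logApprox hΦ _) (two_le_order_logApprox hΦ _)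
        hstep i)

lemma expDeriv_logField (hΦ : TangentId Φ) (i : Fin N) :
    expDeriv (logField Φ) (X i) = Φ i := by
  refine (sub_eq_zero.mp (order_eq_top_iff.mp (ENat.eq_top_iff_forall_ge.mpr fun d => ?_))).symm
  set W := logApprox Φ d
  have hclose : ∀ j, (d : ℕ∞) ≤ ((logField Φ - W) j).order :=
    le_order_logField_sub_logApprox Φ d
  rw [show Φ i - expDeriv (logField Φ) (X i) = (Φ i - expDeriv W (X i))
      - (expDeriv (logField Φ) (X i) - expDeriv W (X i) - (logField Φ - W) i)
      - (logField Φ - W) i by ring]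
  refine le_order_sub (le_order_sub (le_order_sub_expDeriv_logApprox hΦ d i) ?_) (hclose i)
  exact (le_order_expDeriv_sub_sub (two_le_order_logField hΦ) (two_le_order_logApprox hΦ d)
    hclose i).trans' le_self_add

end Logarithm

end Sternberg

open Sternberg in
/-- Sternberg interpolation: a formal diffeomorphism `Φ` of `(ℝ^N, 0)`
tangent to the identity can be interpolated by a one-parameter family `Ψ` of formal
diffeomorphisms, with coefficients polynomial in `t`, with `Ψ_0 = Id`, `Ψ_1 = Φ`, and
`Ψ'_t = Ψ'_0 ∘ Ψ_t`. -/
theorem sternberg_interpolation (N : ℕ) (Φ : Fin N → O ℝ N) (hΦ : TangentId Φ) :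
    ∃ Ψ : Fin N → O (Polynomial ℝ) N,
      TangentId Ψ ∧
      (∀ i, evalAt 0 (Ψ i) = MvPowerSeries.X i) ∧
      (∀ i, evalAt 1 (Ψ i) = Φ i) ∧
      (∀ i, tder (Ψ i) = psubst Ψ (toPoly (evalAt 0 (tder (Ψ i))))) := by
  set V := logField Φ
  have hV : ∀ i, 2 ≤ (V i).order := two_le_order_logField hΦ
  refine ⟨fun i => expFamily V (X i), tangentId_expFamily hV,
    fun i => map_eval_zero_expFamily V (X i), expDeriv_logField hΦ, fun i => ?_⟩
  have hder : tder (expFamily V (X i)) = expFamily V (V i) := by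
    ext m : 1
    rw [← vecDeriv_X V i]
    exact derivative_coeff_expFamily hV _ m
  rw [hder, evalAt, map_eval_zero_expFamily]
  exact (psubst_expFamily hV (V i)).symm
end
end

section
/- Interpolation in the isotropy group: let f be a function germ, let Φ be a diffeomorphism germ tangent to the identity with Φ*f = g·f for a unit g with g(0) = 1. Then there exist a one-parameter family of formal diffeomorphisms Φ_t and formal units g_t, with coefficients polynomial in t, such that Φ_0 = Id, Φ_1 = Φ, g_0 = 1, g_1 = g, and Φ_t* f = g_t · f for all t. -/
open MvPowerSeries Finset

noncomputable section

variable {R : Type*} [CommRing R] {N : ℕ}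

section Families

variable {N : ℕ}

/-! Write `Φ*` for substitution of `Φ`. Tangency to the identity means that `Φ* - 1` raises the
order of power series, and since `g(0) = 1` so does `S - 1` for the twisted operator
`S h = g · Φ*h`. For such an operator the binomial expansion `S^n = ∑ₖ (n choose k) (S - 1)^k`
contributes to the coefficient of `x^m` only through the terms with `k ≤ |m|`, so that coefficient
of `S^n h` is a polynomial in `n`; replacing `n choose k` by the binomial polynomial `t choose k`
interpolates `S^t h`. Take `Ψ_t = (Φ*)^t X` and `G_t = S^t 1`: at natural times `(Φ*)^n f = G_n f`
by induction on `n`, and an identity between families with polynomial coefficients holds once it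
holds at all natural times. -/

theorem Finsupp.card_toMultiset_eq_degree {σ : Type*} (d : σ →₀ ℕ) :
    Multiset.card (toMultiset d) = d.degree :=
  card_toMultiset d

theorem Finsupp.exists_eq_single_of_degree_eq_one {σ : Type*} {d : σ →₀ ℕ} (h : d.degree = 1) :
    ∃ j, d = Finsupp.single j 1 := by
  classical
  obtain ⟨j, hj⟩ := Multiset.card_eq_one.mp ((card_toMultiset_eq_degree d).trans h)
  exact ⟨j, by rw [← Multiset.toFinsupp_singleton, ← hj, toMultiset_toFinsupp]⟩

theorem Finsupp.prod_pow_eq_prod_map_toMultiset {σ M : Type*} [CommMonoid M] (d : σ →₀ ℕ)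
    (c : σ → M) : (d.prod fun i e => c i ^ e) = ((Finsupp.toMultiset d).map c).prod := by
  rw [Finsupp.toMultiset_map, Finsupp.prod_toMultiset,
    Finsupp.prod_mapDomain_index (fun _ => pow_zero _) (fun _ _ _ => pow_add _ _ _)]

theorem Polynomial.eq_of_eval_natCast_eq {K : Type*} [Field K] [CharZero K] {p q : Polynomial K}
    (h : ∀ n : ℕ, p.eval (n : K) = q.eval (n : K)) : p = q :=
  eq_of_infinite_eval_eq p q (Set.infinite_of_injective_forall_mem Nat.cast_injective h)

theorem Polynomial.eval_natCast_choose_X {K : Type*} [Field K] [CharZero K] (n k : ℕ) :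
    (Ring.choose (X : Polynomial K) k).eval (n : K) = n.choose k := by
  rw [← coe_evalRingHom, Ring.map_choose, coe_evalRingHom, eval_X, Ring.choose_natCast]

namespace MvPowerSeries

section OrderRaising

variable {σ A : Type*} [CommRing A]

def OrderRaising (E : Module.End A (MvPowerSeries σ A)) : Prop :=
  ∀ h, h.order + 1 ≤ (E h).order

variable {E S : Module.End A (MvPowerSeries σ A)}

theorem OrderRaising.le_order_pow_apply (hE : OrderRaising E) (h : MvPowerSeries σ A) :
    ∀ k : ℕ, (k : ℕ∞) ≤ ((E ^ k) h).order
  | 0 => by simp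
  | k + 1 => by
    rw [pow_succ', Module.End.mul_apply, Nat.cast_succ]
    exact (add_le_add_left (hE.le_order_pow_apply h k) 1).trans (hE _)

theorem OrderRaising.le_order_apply (hS : OrderRaising (S - 1)) (h : MvPowerSeries σ A) :
    h.order ≤ (S h).order := by
  have hsplit : S h = h + (S - 1) h := by simp
  rw [hsplit]
  exact le_min le_rfl (le_self_add.trans (hS h)) |>.trans min_order_le_add

theorem OrderRaising.pow_sub_one (hS : OrderRaising (S - 1)) :
    ∀ n : ℕ, OrderRaising (S ^ n - 1)
  | 0 => fun h => by simp
  | n + 1 => fun h => by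
    have hsplit : (S ^ (n + 1) - 1) h = (S - 1) ((S ^ n) h) + (S ^ n - 1) h := by
      simp [pow_succ']
    rw [hsplit]
    refine le_min ?_ (hS.pow_sub_one n h) |>.trans min_order_le_add
    exact (add_le_add_left ((hS.pow_sub_one n).le_order_apply h) 1).trans (hS _)

theorem coeff_pow_apply_of_orderRaising (hS : OrderRaising (S - 1)) (h : MvPowerSeries σ A)
    (n : ℕ) (m : σ →₀ ℕ) :
    coeff m ((S ^ n) h) =
      ∑ k ∈ range (m.degree + 1), (n.choose k : A) * coeff m (((S - 1) ^ k) h) := by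
  have hbinom : S ^ n =
      ∑ k ∈ range (n + 1), (S - 1) ^ k * 1 ^ (n - k) * (n.choose k : Module.End A _) := by
    rw [← (Commute.one_right (S - 1)).add_pow, sub_add_cancel]
  have hchoose : ∀ k ∈ range (n + m.degree + 1), k ∉ range (n + 1) →
      (n.choose k : A) * coeff m (((S - 1) ^ k) h) = 0 := fun k _ hk => by
    rw [Nat.choose_eq_zero_of_lt (by simpa using hk), Nat.cast_zero, zero_mul]
  have hvanish : ∀ k ∈ range (n + m.degree + 1), k ∉ range (m.degree + 1) →
      (n.choose k : A) * coeff m (((S - 1) ^ k) h) = 0 := fun k _ hk => by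
    rw [coeff_of_lt_order ((by simpa using hk : (m.degree : ℕ∞) < k).trans_le
      (hS.le_order_pow_apply h k)), mul_zero]
  calc coeff m ((S ^ n) h)
      = ∑ k ∈ range (n + 1), (n.choose k : A) * coeff m (((S - 1) ^ k) h) := by
        rw [hbinom, LinearMap.sum_apply, map_sum]
        refine sum_congr rfl fun k _ => ?_
        rw [one_pow, mul_one, Module.End.mul_apply, Module.End.natCast_apply, map_nsmul, map_nsmul,
          nsmul_eq_mul]
    _ = ∑ k ∈ range (n + m.degree + 1), (n.choose k : A) * coeff m (((S - 1) ^ k) h) :=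
        sum_subset (range_subset_range.mpr (by omega)) hchoose
    _ = _ := (sum_subset (range_subset_range.mpr (by omega)) hvanish).symm

theorem orderRaising_mulLeft_mul_sub_one {T : Module.End A (MvPowerSeries σ A)}
    {g : MvPowerSeries σ A} (hg : constantCoeff g = 1) (hT : OrderRaising (T - 1)) :
    OrderRaising (LinearMap.mulLeft A g * T - 1) := by
  intro h
  have hsplit : (LinearMap.mulLeft A g * T - 1) h = (g - 1) * T h + (T - 1) h := by
    simp only [LinearMap.sub_apply, Module.End.mul_apply, LinearMap.mulLeft_apply,
      Module.End.one_apply]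
    ring
  have hg1 : 1 ≤ (g - 1).order :=
    one_le_order_iff_constCoeff_eq_zero.mpr (by rw [map_sub, hg, map_one, sub_self])
  rw [hsplit]
  refine le_min ?_ (hT h) |>.trans min_order_le_add
  rw [add_comm]
  exact (add_le_add hg1 (hT.le_order_apply h)).trans le_order_mul

end OrderRaising

section Substitution

variable {σ ι A : Type*} [CommRing A]

theorem card_le_order_prod_map {a : ι → MvPowerSeries σ A} (ha : ∀ i, 1 ≤ (a i).order)
    (s : Multiset ι) : (Multiset.card s : ℕ∞) ≤ (s.map a).prod.order := by
  induction s using Multiset.induction_on with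
  | empty => simp
  | cons i s ih =>
    rw [Multiset.map_cons, Multiset.prod_cons, Multiset.card_cons, Nat.cast_succ, add_comm]
    exact (add_le_add (ha i) ih).trans le_order_mul

theorem card_add_one_le_order_prod_map_sub {a b : ι → MvPowerSeries σ A}
    (ha : ∀ i, 1 ≤ (a i).order) (hb : ∀ i, 1 ≤ (b i).order) (hab : ∀ i, 2 ≤ (a i - b i).order)
    (s : Multiset ι) :
    (Multiset.card s : ℕ∞) + 1 ≤ ((s.map a).prod - (s.map b).prod).order := by
  induction s using Multiset.induction_on with
  | empty => simp
  | cons i s ih =>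
    have hsplit : ((i ::ₘ s).map a).prod - ((i ::ₘ s).map b).prod =
        (a i - b i) * (s.map a).prod + b i * ((s.map a).prod - (s.map b).prod) := by
      simp only [Multiset.map_cons, Multiset.prod_cons]; ring
    rw [hsplit, Multiset.card_cons, Nat.cast_succ]
    refine le_min ?_ ?_ |>.trans min_order_le_add
    · calc (Multiset.card s : ℕ∞) + 1 + 1 = 2 + Multiset.card s := by ring
        _ ≤ _ := (add_le_add (hab i) (card_le_order_prod_map ha s)).trans le_order_mul
    · calc (Multiset.card s : ℕ∞) + 1 + 1 = 1 + (Multiset.card s + 1) := by ring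
        _ ≤ _ := (add_le_add (hb i) ih).trans le_order_mul

theorem degree_le_order_prod_pow {a : σ → MvPowerSeries σ A} (ha : ∀ i, 1 ≤ (a i).order)
    (d : σ →₀ ℕ) : (d.degree : ℕ∞) ≤ (d.prod fun i e => a i ^ e).order := by
  rw [Finsupp.prod_pow_eq_prod_map_toMultiset, ← Finsupp.card_toMultiset_eq_degree]
  exact card_le_order_prod_map ha _

theorem degree_add_one_le_order_prod_pow_sub {a b : σ → MvPowerSeries σ A}
    (ha : ∀ i, 1 ≤ (a i).order) (hb : ∀ i, 1 ≤ (b i).order) (hab : ∀ i, 2 ≤ (a i - b i).order)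
    (d : σ →₀ ℕ) :
    (d.degree : ℕ∞) + 1 ≤ ((d.prod fun i e => a i ^ e) - d.prod fun i e => b i ^ e).order := by
  rw [Finsupp.prod_pow_eq_prod_map_toMultiset, Finsupp.prod_pow_eq_prod_map_toMultiset,
    ← Finsupp.card_toMultiset_eq_degree]
  exact card_add_one_le_order_prod_map_sub ha hb hab _

theorem constantCoeff_eq_zero_of_two_le_order_sub_X {φ : MvPowerSeries σ A} {i : σ}
    (h : 2 ≤ (φ - X i).order) : constantCoeff φ = 0 := by
  have h1 : constantCoeff (φ - X i) = 0 :=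
    one_le_order_iff_constCoeff_eq_zero.mp (le_trans (by norm_num) h)
  rwa [map_sub, constantCoeff_X, sub_zero] at h1

theorem one_le_order_of_two_le_order_sub_X {φ : MvPowerSeries σ A} {i : σ}
    (h : 2 ≤ (φ - X i).order) : 1 ≤ φ.order :=
  one_le_order_iff_constCoeff_eq_zero.mpr (constantCoeff_eq_zero_of_two_le_order_sub_X h)

theorem one_le_order_X (i : σ) : 1 ≤ (X i : MvPowerSeries σ A).order :=
  one_le_order_iff_constCoeff_eq_zero.mpr (constantCoeff_X i)

variable {a : σ → MvPowerSeries σ A}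

theorem orderRaising_substAlgHom_sub_one (ha : HasSubst a) (ha2 : ∀ i, 2 ≤ (a i - X i).order) :
    OrderRaising ((substAlgHom ha).toLinearMap - 1) := by
  intro h
  refine le_order fun m hm => ?_
  have hself : coeff m h = coeff m (subst X h) := by rw [subst_self, id]
  rw [LinearMap.sub_apply, Module.End.one_apply, AlgHom.toLinearMap_apply, substAlgHom_apply,
    map_sub, hself, coeff_subst ha, coeff_subst HasSubst.X,
    ← finsum_sub_distrib (coeff_subst_finite ha h m) (coeff_subst_finite HasSubst.X h m)]
  refine finsum_eq_zero_of_forall_eq_zero fun d => ?_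
  rw [← smul_sub, ← map_sub]
  by_cases hd : coeff d h = 0
  · rw [hd, zero_smul]
  · refine (congrArg _ (coeff_of_lt_order ?_)).trans (smul_zero _)
    calc (m.degree : ℕ∞) < h.order + 1 := hm
      _ ≤ d.degree + 1 := add_le_add_left (order_le hd) 1
      _ ≤ _ := degree_add_one_le_order_prod_pow_sub
          (fun i => one_le_order_of_two_le_order_sub_X (ha2 i)) one_le_order_X ha2 d

end Substitution

section Iterates

variable {σ A : Type*} [CommRing A] {a : σ → MvPowerSeries σ A}

theorem hasSubst_pow_apply_X (ha : HasSubst a) :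
    ∀ n : ℕ, HasSubst fun i => ((substAlgHom ha).toLinearMap ^ n) (X i : MvPowerSeries σ A)
  | 0 => by simpa using HasSubst.X
  | n + 1 => by
    simpa only [pow_succ', Module.End.mul_apply, AlgHom.toLinearMap_apply] using
      (hasSubst_pow_apply_X ha n).comp ha

theorem subst_pow_apply_X (ha : HasSubst a) (f : MvPowerSeries σ A) :
    ∀ n : ℕ, subst (fun i => ((substAlgHom ha).toLinearMap ^ n) (X i : MvPowerSeries σ A)) f =
      ((substAlgHom ha).toLinearMap ^ n) f
  | 0 => by simp [subst_self]
  | n + 1 => by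
    simp only [pow_succ', Module.End.mul_apply, AlgHom.toLinearMap_apply, substAlgHom_apply]
    rw [← subst_comp_subst_apply (hasSubst_pow_apply_X ha n) ha, subst_pow_apply_X ha f n]

end Iterates

section Interpolation

variable {σ K : Type*} [Field K] [CharZero K]

theorem eq_of_map_evalRingHom_natCast_eq {F G : MvPowerSeries σ (Polynomial K)}
    (h : ∀ n : ℕ, map (Polynomial.evalRingHom (n : K)) F = map (Polynomial.evalRingHom (n : K)) G) :
    F = G :=
  ext fun m => Polynomial.eq_of_eval_natCast_eq fun n => by
    simpa only [coeff_map, Polynomial.coe_evalRingHom] using congrArg (coeff m) (h n)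

theorem le_order_of_le_order_map_evalRingHom_natCast {F : MvPowerSeries σ (Polynomial K)}
    {k : ℕ∞} (h : ∀ n : ℕ, k ≤ (map (Polynomial.evalRingHom (n : K)) F).order) : k ≤ F.order :=
  le_order fun m hm => Polynomial.eq_of_eval_natCast_eq fun n => by
    simpa only [coeff_map, Polynomial.coe_evalRingHom, Polynomial.eval_zero] using
      coeff_of_lt_order (hm.trans_le (h n))

def powFamily (S : Module.End K (MvPowerSeries σ K)) (h : MvPowerSeries σ K) :
    MvPowerSeries σ (Polynomial K) := fun m =>
  ∑ k ∈ range (m.degree + 1),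
    Polynomial.C (coeff m (((S - 1) ^ k) h)) * Ring.choose Polynomial.X k

variable {S : Module.End K (MvPowerSeries σ K)}

theorem map_evalRingHom_powFamily (hS : OrderRaising (S - 1)) (h : MvPowerSeries σ K) (n : ℕ) :
    map (Polynomial.evalRingHom (n : K)) (powFamily S h) = (S ^ n) h := by
  ext m
  rw [coeff_map, coeff_pow_apply_of_orderRaising hS]
  simp [powFamily, coeff_apply, Polynomial.eval_natCast_choose_X, mul_comm]

end Interpolation

end MvPowerSeries

theorem AlgHom.pow_toLinearMap_apply_eq_mul {R B : Type*} [CommSemiring R] [CommSemiring B]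
    [Algebra R B] (T : B →ₐ[R] B) {f g : B} (hf : T f = g * f) (n : ℕ) :
    (T.toLinearMap ^ n) f = ((LinearMap.mulLeft R g * T.toLinearMap) ^ n) 1 * f := by
  induction n with
  | zero => simp
  | succ n ih =>
    simp only [pow_succ', Module.End.mul_apply, ih, AlgHom.toLinearMap_apply, map_mul, hf,
      LinearMap.mulLeft_apply]
    ring

theorem tangentId_iff_two_le_order_sub_X (Φ : Fin N → O R N) :
    TangentId Φ ↔ ∀ i, 2 ≤ (Φ i - X i).order := by
  classical
  constructor
  · rintro ⟨h0, h1⟩ i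
    refine le_order fun d hd => ?_
    have hd' : d.degree < 2 := by exact_mod_cast hd
    rw [map_sub, sub_eq_zero]
    interval_cases h : d.degree
    · rw [(Finsupp.degree_eq_zero_iff d).mp h, coeff_zero_eq_constantCoeff_apply,
        coeff_zero_eq_constantCoeff_apply, h0, constantCoeff_X]
    · obtain ⟨j, rfl⟩ := Finsupp.exists_eq_single_of_degree_eq_one h
      rw [h1, coeff_X]
      simp [Finsupp.single_left_inj, eq_comm]
  · intro h
    refine ⟨fun i => constantCoeff_eq_zero_of_two_le_order_sub_X (h i), fun i j => ?_⟩
    have hlin := coeff_of_lt_order (d := Finsupp.single j 1)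
      ((by simp : ((Finsupp.single j 1 : Fin N →₀ ℕ).degree : ℕ∞) < 2).trans_le (h i))
    rw [map_sub, sub_eq_zero, coeff_X] at hlin
    simpa [Finsupp.single_left_inj, eq_comm] using hlin

theorem coeff_psubst (Φ : Fin N → O R N) (f : O R N) (m : Fin N →₀ ℕ) :
    coeff m (psubst Φ f) =
      ∑ k ∈ Iic (Finsupp.equivFunOnFinite.symm fun _ => m.degree),
        coeff k f * coeff m (∏ i, Φ i ^ k i) :=
  rfl

theorem psubst_eq_subst {Φ : Fin N → O R N} (hΦ : ∀ i, constantCoeff (Φ i) = 0) (f : O R N) :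
    psubst Φ f = subst Φ f := by
  ext m
  -- outside the box summed over by `psubst`, the monomials `Φ^d` have order `> |m|`
  have hsupp : (Function.support fun d => coeff d f • coeff m (d.prod fun i e => Φ i ^ e)) ⊆
      ((Iic (Finsupp.equivFunOnFinite.symm fun _ => m.degree) : Finset (Fin N →₀ ℕ)) :
        Set (Fin N →₀ ℕ)) := by
    intro d hd
    by_contra hdm
    obtain ⟨i, hi⟩ : ∃ i, m.degree < d i := by simpa [Finsupp.le_def] using hdm
    have hzero : coeff m (d.prod fun i e => Φ i ^ e) = 0 := coeff_of_lt_order <|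
      calc (m.degree : ℕ∞) < d i := by exact_mod_cast hi
        _ ≤ d.degree := by exact_mod_cast Finsupp.le_degree i d
        _ ≤ _ := degree_le_order_prod_pow
          (fun i => one_le_order_iff_constCoeff_eq_zero.mpr (hΦ i)) d
    exact hd (by beta_reduce; rw [hzero, smul_zero])
  rw [coeff_subst (hasSubst_of_constantCoeff_zero hΦ), finsum_eq_sum_of_support_subset _ hsupp,
    coeff_psubst]
  exact sum_congr rfl fun d _ => by rw [smul_eq_mul, Finsupp.prod_fintype _ _ fun _ => pow_zero _]

theorem evalAt_psubst (r : ℝ) (Ψ : Fin N → O (Polynomial ℝ) N) (F : O (Polynomial ℝ) N) :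
    evalAt r (psubst Ψ F) = psubst (fun i => evalAt r (Ψ i)) (evalAt r F) := by
  ext m
  rw [evalAt, coeff_map, coeff_psubst, coeff_psubst, map_sum]
  refine sum_congr rfl fun k _ => ?_
  rw [map_mul, ← coeff_map, ← coeff_map, map_prod]
  simp only [map_pow]

theorem evalAt_toPoly (r : ℝ) (f : O ℝ N) : evalAt r (toPoly f) = f := by
  ext m
  simp [evalAt, toPoly, coeff_map]

/-- interpolation in the isotropy group: if `Φ` is tangent to the
identity and `Φ*f = g·f` with `g(0) = 1`, then there are a one-parameter family of
formal diffeomorphisms `Ψ_t` and formal units `G_t`, with coefficients polynomial in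
`t`, with `Ψ_0 = Id`, `Ψ_1 = Φ`, `G_0 = 1`, `G_1 = g`, and `Ψ_t* f = G_t · f`. -/
theorem isotropy_interpolation (N : ℕ) (f g : O ℝ N) (Φ : Fin N → O ℝ N)
    (hΦ : TangentId Φ) (hg : constantCoeff g = 1)
    (hpres : psubst Φ f = g * f) :
    ∃ (Ψ : Fin N → O (Polynomial ℝ) N) (G : O (Polynomial ℝ) N),
      TangentId Ψ ∧
      (∀ i, evalAt 0 (Ψ i) = MvPowerSeries.X i) ∧
      (∀ i, evalAt 1 (Ψ i) = Φ i) ∧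
      evalAt 0 G = 1 ∧
      evalAt 1 G = g ∧
      psubst Ψ (toPoly f) = G * toPoly f := by
  have ha : HasSubst Φ := hasSubst_of_constantCoeff_zero hΦ.1
  set T := (substAlgHom (R := ℝ) ha).toLinearMap
  set S := LinearMap.mulLeft ℝ g * T
  have hT : OrderRaising (T - 1) :=
    orderRaising_substAlgHom_sub_one ha ((tangentId_iff_two_le_order_sub_X Φ).mp hΦ)
  have hS : OrderRaising (S - 1) := orderRaising_mulLeft_mul_sub_one hg hT
  have hTf : T f = g * f := by
    rwa [AlgHom.toLinearMap_apply, substAlgHom_apply, ← psubst_eq_subst hΦ.1]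
  have hTX : ∀ (n : ℕ) i, 2 ≤ ((T ^ n) (X i) - X i).order := fun n i =>
    (add_le_add_left (one_le_order_X i) 1).trans (hT.pow_sub_one n (X i))
  have hΨ : ∀ (n : ℕ) i, evalAt n (powFamily T (X i)) = (T ^ n) (X i) := fun n i =>
    map_evalRingHom_powFamily hT (X i) n
  have hG : ∀ n : ℕ, evalAt n (powFamily S 1) = (S ^ n) 1 := map_evalRingHom_powFamily hS 1
  refine ⟨fun i => powFamily T (X i), powFamily S 1, ?_, fun i => ?_, fun i => ?_, ?_, ?_, ?_⟩
  · refine (tangentId_iff_two_le_order_sub_X _).mpr fun i =>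
      le_order_of_le_order_map_evalRingHom_natCast fun n => ?_
    rw [map_sub, map_X]
    exact (hΨ n i).symm ▸ hTX n i
  · simpa using hΨ 0 i
  · simpa [T, substAlgHom_apply, subst_X ha] using hΨ 1 i
  · simpa using hG 0
  · simpa only [Nat.cast_one, pow_one, Module.End.mul_apply, LinearMap.mulLeft_apply, S, T,
      AlgHom.toLinearMap_apply, map_one, mul_one] using hG 1
  · refine eq_of_map_evalRingHom_natCast_eq fun n => ?_
    change evalAt n (psubst _ (toPoly f)) = evalAt n (_ * toPoly f)
    rw [evalAt_psubst, map_mul, evalAt_toPoly]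
    simp only [hΨ]
    rw [psubst_eq_subst fun i => constantCoeff_eq_zero_of_two_le_order_sub_X (hTX n i),
      subst_pow_apply_X ha, AlgHom.pow_toLinearMap_apply_eq_mul _ hTf n, hG n]
end Families
end
end
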